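/- arXiv:1612.07286 — 4 statements merged into one kernel-verified Lean document; each statement's English description precedes it below -/
import Mathlib

section
/- The generating function B(z) = (1 - sqrt(1-4z))/(2z) of binary trees (equivalently, the formal power series satisfying B(z) = 1 + z·B(z)²) satisfies the identity B(z) = 1 + (z/(1-2z))·B(z²/(1-2z)²). -/
open Complex

/-- The generating function of binary trees, `B(z) = (1 - sqrt(1-4z))/(2z)`,
taken with the principal branch of the square root. -/
noncomputable def treeGF (z : ℂ) : ℂ := (1 - (1 - 4 * z) ^ ((1 : ℂ) / 2)) / (2 * z)

/-!
With `s = √(1 - 4z)` and `c = 1 - 2z` one has `1 - 4z²/c² = s²/c²`, so the square root appearing in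
`B(z²/c²)` is `s/c`, after which the identity is a rational one in `z`, `s` and `c`.
The only analytic point is the choice of branch: `s/c` is the principal root because `s` and `c`
both lie in the sector `|arg| < π/4`, so their quotient has positive real part.
-/

namespace Complex

lemma cpow_one_div_two_sq (x : ℂ) : (x ^ ((1 : ℂ) / 2)) ^ 2 = x := by
  rw [one_div]
  exact cpow_ofNat_inv_pow x 2

lemma re_cpow_one_div_two_nonneg (x : ℂ) : 0 ≤ (x ^ ((1 : ℂ) / 2)).re := by
  rw [one_div, cpow_inv_two_re]
  exact Real.sqrt_nonneg _

lemma cpow_one_div_two_eq_of_sq_eq {x t : ℂ} (h : t ^ 2 = x) (ht : 0 < t.re) :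
    x ^ ((1 : ℂ) / 2) = t := by
  have hsq : (x ^ ((1 : ℂ) / 2)) ^ 2 = t ^ 2 := by rw [cpow_one_div_two_sq, h]
  rcases sq_eq_sq_iff_eq_or_eq_neg.mp hsq with heq | hneg
  · exact heq
  · have := re_cpow_one_div_two_nonneg x
    rw [hneg, neg_re] at this
    linarith

lemma abs_im_lt_re_of_re_sq_pos {a : ℂ} (ha : 0 ≤ a.re) (h : 0 < (a ^ 2).re) :
    |a.im| < a.re := by
  rw [sq, mul_re] at h
  exact abs_lt_of_sq_lt_sq (by nlinarith) ha

lemma re_div_pos_of_abs_im_lt_re {a b : ℂ} (ha : |a.im| < a.re) (hb : |b.im| < b.re) :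
    0 < (a / b).re := by
  have hb_re : 0 < b.re := (abs_nonneg _).trans_lt hb
  have hb0 : b ≠ 0 := fun h => by simp [h] at hb_re
  have hcross : |a.im * b.im| < a.re * b.re := by
    rw [abs_mul]
    calc |a.im| * |b.im| ≤ |a.im| * b.re := mul_le_mul_of_nonneg_left hb.le (abs_nonneg _)
      _ < a.re * b.re := mul_lt_mul_of_pos_right ha hb_re
  rw [div_re, ← add_div]
  have hnum : 0 < a.re * b.re + a.im * b.im := by linarith [neg_abs_le (a.im * b.im)]
  exact div_pos hnum (normSq_pos.mpr hb0)

end Complex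

lemma abs_im_lt_re_one_sub_two_mul {z : ℂ} (hz : ‖z‖ < 1 / 4) :
    |(1 - 2 * z).im| < (1 - 2 * z).re := by
  have hre : (1 - 2 * z).re = 1 - 2 * z.re := by simp
  have him : (1 - 2 * z).im = -(2 * z.im) := by simp
  rw [hre, him, abs_neg, abs_mul, abs_two]
  linarith [(abs_le.mp (abs_re_le_norm z)).2, abs_im_le_norm z]

lemma abs_im_lt_re_one_sub_four_mul_cpow_one_div_two {z : ℂ} (hz : ‖z‖ < 1 / 4) :
    |((1 - 4 * z) ^ ((1 : ℂ) / 2)).im| < ((1 - 4 * z) ^ ((1 : ℂ) / 2)).re := by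
  refine abs_im_lt_re_of_re_sq_pos (re_cpow_one_div_two_nonneg _) ?_
  rw [cpow_one_div_two_sq]
  have hre : (1 - 4 * z).re = 1 - 4 * z.re := by simp
  rw [hre]
  linarith [(abs_le.mp (abs_re_le_norm z)).2]

lemma one_sub_four_mul_sq_div_sq_cpow_one_div_two {z : ℂ} (hz : ‖z‖ < 1 / 4) :
    (1 - 4 * (z ^ 2 / (1 - 2 * z) ^ 2)) ^ ((1 : ℂ) / 2)
      = (1 - 4 * z) ^ ((1 : ℂ) / 2) / (1 - 2 * z) := by
  have hc := abs_im_lt_re_one_sub_two_mul hz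
  have hc0 : 1 - 2 * z ≠ 0 := fun h => by simp [h] at hc
  refine cpow_one_div_two_eq_of_sq_eq ?_ (re_div_pos_of_abs_im_lt_re
    (abs_im_lt_re_one_sub_four_mul_cpow_one_div_two hz) hc)
  rw [div_pow, cpow_one_div_two_sq]
  set c := 1 - 2 * z
  field_simp
  ring

/-- `B(z) = 1 + (z/(1-2z)) · B(z²/(1-2z)²)`. -/
theorem treeGF_functional_identity (z : ℂ) (hz : z ≠ 0) (hz4 : ‖z‖ < 1 / 4) :
    treeGF z = 1 + (z / (1 - 2 * z)) * treeGF (z ^ 2 / (1 - 2 * z) ^ 2) := by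
  have hc0 : 1 - 2 * z ≠ 0 := fun h => by
    simpa [h] using abs_im_lt_re_one_sub_two_mul hz4
  rw [treeGF, treeGF, one_sub_four_mul_sq_div_sq_cpow_one_div_two hz4]
  set c := 1 - 2 * z
  set s := (1 - 4 * z) ^ ((1 : ℂ) / 2)
  field_simp
  ring
end

section
/- Touchard's identity: for all n ≥ 0, the Catalan numbers satisfy C_{n+1} = Σ_{0 ≤ k ≤ n/2} C_k · 2^{n-2k} · binomial(n, 2k). -/
/-!
Write `C_k = binom(2k, k) - binom(2k, k+1)`. Reading off the coefficient of
`X^(n+2r)` in `(1 + X)^(2n) = ((1 + X²) + 2X)^n` gives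
`binom(2n, n+2r) = Σ_k binom(2k, k+r) 2^(n-2k) binom(n, 2k)`, where only even powers of
`1 + X²` contribute. Subtracting the cases `r = 1` from `r = 0` turns the right-hand side into
Touchard's sum, and the left-hand side `binom(2n, n) - binom(2n, n+2)` is `C_{n+1}` by Pascal's rule.
-/

open Polynomial Finset

theorem Polynomial.coeff_one_add_X_sq_pow {R : Type*} [CommSemiring R] (j t : ℕ) :
    ((1 + X ^ 2 : R[X]) ^ j).coeff t = if 2 ∣ t then (j.choose (t / 2) : R) else 0 := by
  have h : (1 + X ^ 2 : R[X]) ^ j = expand R 2 ((1 + X) ^ j) := by simp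
  rw [h, coeff_expand two_pos, coeff_one_add_X_pow]

theorem Finset.sum_range_succ_ite_two_dvd {M : Type*} [AddCommMonoid M] (n : ℕ) (f : ℕ → M) :
    (∑ j ∈ range (n + 1), if 2 ∣ j then f j else 0) = ∑ k ∈ range (n / 2 + 1), f (2 * k) := by
  rw [← sum_filter, eq_comm]
  refine sum_nbij' (2 * ·) (· / 2) ?_ ?_ ?_ ?_ ?_ <;> intro a ha <;>
    simp only [mem_filter, mem_range] at ha ⊢ <;> omega

theorem Nat.choose_two_mul_add_two_mul (n r : ℕ) :
    (2 * n).choose (n + 2 * r) =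
      ∑ k ∈ range (n / 2 + 1), (2 * k).choose (k + r) * 2 ^ (n - 2 * k) * n.choose (2 * k) := by
  have hsq : (1 + X : ℕ[X]) ^ (2 * n) = ((1 + X ^ 2) + 2 * X) ^ n := by rw [pow_mul]; ring
  have hterm : ∀ j ∈ range (n + 1),
      ((1 + X ^ 2 : ℕ[X]) ^ j * (2 * X) ^ (n - j) * (n.choose j : ℕ[X])).coeff (n + 2 * r) =
        if 2 ∣ j then j.choose (j / 2 + r) * 2 ^ (n - j) * n.choose j else 0 := by
    intro j hj
    have hjn : j ≤ n := Nat.lt_succ_iff.mp (mem_range.mp hj)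
    have hmon : (1 + X ^ 2 : ℕ[X]) ^ j * (2 * X) ^ (n - j) * (n.choose j : ℕ[X]) =
        (1 + X ^ 2) ^ j * ((2 ^ (n - j) * n.choose j : ℕ) : ℕ[X]) * X ^ (n - j) := by
      push_cast; ring
    rw [hmon, coeff_mul_X_pow', if_pos (by omega), coeff_mul_natCast,
      show n + 2 * r - (n - j) = j + 2 * r by omega, coeff_one_add_X_sq_pow]
    by_cases hj2 : 2 ∣ j
    · rw [if_pos (by omega), if_pos hj2, show (j + 2 * r) / 2 = j / 2 + r by omega, Nat.cast_id,
        Nat.cast_id, mul_assoc]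
    · rw [if_neg (by omega), if_neg hj2, zero_mul]
  rw [← Nat.cast_id ((2 * n).choose (n + 2 * r)), ← coeff_one_add_X_pow, hsq, add_pow,
    finsetSum_coeff, sum_congr rfl hterm, sum_range_succ_ite_two_dvd]
  refine sum_congr rfl fun k _ => ?_
  rw [Nat.mul_div_cancel_left k two_pos]

theorem catalan_eq_choose_sub_choose (k : ℕ) :
    (catalan k : ℤ) = (2 * k).choose k - (2 * k).choose (k + 1) := by
  have hcentral : ((k + 1) * catalan k : ℤ) = (2 * k).choose k :=
    mod_cast succ_mul_catalan_eq_centralBinom k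
  have hsucc : ((2 * k).choose (k + 1) * (k + 1) : ℤ) = (2 * k).choose k * k := by
    have := Nat.choose_succ_right_eq (2 * k) k
    rw [show 2 * k - k = k by omega] at this
    exact_mod_cast this
  refine mul_left_cancel₀ (by positivity : (k + 1 : ℤ) ≠ 0) ?_
  linear_combination hcentral + hsucc

theorem catalan_succ_eq_choose_sub_choose (n : ℕ) :
    (catalan (n + 1) : ℤ) = (2 * n).choose n - (2 * n).choose (n + 2) := by
  rw [catalan_eq_choose_sub_choose, show 2 * (n + 1) = 2 * n + 1 + 1 by ring,
    Nat.choose_succ_succ' (2 * n + 1) n, Nat.choose_succ_succ' (2 * n + 1) (n + 1),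
    ← Nat.choose_symm_half, Nat.choose_succ_succ' (2 * n) n, Nat.choose_succ_succ' (2 * n) (n + 1)]
  push_cast
  ring

/-- Touchard's identity for Catalan numbers:
`C_{n+1} = Σ_{0 ≤ k ≤ n/2} C_k · 2^{n-2k} · binomial(n, 2k)`. -/
theorem touchard_identity (n : ℕ) :
    catalan (n + 1) =
      ∑ k ∈ Finset.range (n / 2 + 1), catalan k * 2 ^ (n - 2 * k) * n.choose (2 * k) := by
  have h₀ := Nat.choose_two_mul_add_two_mul n 0
  have h₁ := Nat.choose_two_mul_add_two_mul n 1
  simp only [mul_zero, add_zero, mul_one] at h₀ h₁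
  zify
  rw [catalan_succ_eq_choose_sub_choose, h₀, h₁]
  push_cast [catalan_eq_choose_sub_choose, sub_mul, sum_sub_distrib]
  rfl
end

section
/- For every k ≥ 1, Σ over pairs (λ, r) with λ ≥ 1, r ≥ 0 and λ·2^r = k of 4^r·r·(-1)^{λ-1}·λ equals 2k·(2^{v₂(k)} - 1), where v₂(k) is the 2-adic valuation of k. -/
/-! The pairs are `(k / 2^r, r)` for `r ≤ v = v₂(k)`, and then `4^r·λ = 2^r·k`. The cofactor `λ` is
even exactly when `r < v`, so the sum is `k·(v·2^v - Σ_{r<v} r·2^r) = k·(2^(v+1) - 2)`. -/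

open Finset

theorem sum_range_natCast_mul_two_pow {R : Type*} [CommRing R] (n : ℕ) :
    ∑ r ∈ range n, (r : R) * 2 ^ r = ((n : R) - 2) * 2 ^ n + 2 := by
  induction n with
  | zero => simp
  | succ n ih => rw [sum_range_succ, ih]; push_cast; ring

theorem filter_mul_pow_eq {p : ℕ} (hp : 1 < p) {k : ℕ} (hk : k ≠ 0) :
    (range (k + 1) ×ˢ range (k + 1)).filter (fun q => q.1 * p ^ q.2 = k)
      = (range (padicValNat p k + 1)).image (fun r => (k / p ^ r, r)) := by
  ext ⟨a, r⟩
  simp only [mem_filter, mem_product, mem_range, mem_image, Prod.mk.injEq, Nat.lt_succ_iff]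
  constructor
  · rintro ⟨-, rfl⟩
    refine ⟨r, ?_, Nat.mul_div_cancel _ (by positivity), rfl⟩
    exact (padicValNat_dvd_iff_le_of_ne_one hp.ne' hk).mp (dvd_mul_left _ _)
  · rintro ⟨r, hr, rfl, rfl⟩
    have hdvd : p ^ r ∣ k := (padicValNat_dvd_iff_le_of_ne_one hp.ne' hk).mpr hr
    have hpow : p ^ r ≤ k := Nat.le_of_dvd (Nat.pos_of_ne_zero hk) hdvd
    exact ⟨⟨Nat.div_le_self k _, (Nat.lt_pow_self hp).le.trans hpow⟩, Nat.div_mul_cancel hdvd⟩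

theorem neg_one_pow_div_two_pow_sub_one_of_lt_padicValNat {k r : ℕ} (hk : k ≠ 0)
    (hr : r < padicValNat 2 k) : (-1 : ℤ) ^ (k / 2 ^ r - 1) = -1 := by
  have hdvd : 2 ^ r * 2 ∣ k := by
    rw [← pow_succ]; exact (padicValNat_dvd_iff_le hk).mpr hr
  have heven : Even (k / 2 ^ r) := even_iff_two_dvd.mpr (Nat.dvd_div_of_mul_dvd hdvd)
  have hpos : 0 < k / 2 ^ r :=
    Nat.div_pos (Nat.le_of_dvd (Nat.pos_of_ne_zero hk) (dvd_of_mul_right_dvd hdvd)) (by positivity)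
  exact (Nat.Even.sub_odd hpos heven odd_one).neg_one_pow

theorem neg_one_pow_div_two_pow_padicValNat_sub_one {k : ℕ} (hk : k ≠ 0) :
    (-1 : ℤ) ^ (k / 2 ^ padicValNat 2 k - 1) = 1 := by
  have hodd : Odd (k / 2 ^ padicValNat 2 k) :=
    Nat.odd_iff.mpr <| Nat.two_dvd_ne_zero.mp fun h =>
      pow_succ_padicValNat_not_dvd hk <| pow_succ 2 _ ▸ Nat.mul_dvd_of_dvd_div pow_padicValNat_dvd h
  exact (Nat.Odd.sub_odd hodd odd_one).neg_one_pow

theorem four_pow_mul_div_two_pow {k r : ℕ} (h : 2 ^ r ∣ k) :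
    (4 : ℤ) ^ r * ((k / 2 ^ r : ℕ) : ℤ) = 2 ^ r * k := by
  rw [show (4 : ℤ) = 2 * 2 by norm_num, mul_pow, mul_assoc]
  exact_mod_cast congrArg (2 ^ r * ·) (Nat.mul_div_cancel' h)

theorem sum_signed_factorizations_general (k : ℕ) :
    ∑ p ∈ (Finset.range (k + 1) ×ˢ Finset.range (k + 1)).filter
        (fun p => p.1 * 2 ^ p.2 = k),
        ((4 : ℤ) ^ p.2 * p.2 * (-1) ^ (p.1 - 1) * p.1)
      = 2 * (k : ℤ) * (2 ^ padicValNat 2 k - 1) := by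
  obtain rfl | hk := eq_or_ne k 0
  · rfl
  rw [filter_mul_pow_eq one_lt_two hk, sum_image fun _ _ _ _ h => (Prod.ext_iff.mp h).2]
  set v := padicValNat 2 k
  have summand : ∀ r ≤ v, (4 : ℤ) ^ r * r * (-1) ^ (k / 2 ^ r - 1) * ((k / 2 ^ r : ℕ) : ℤ)
      = (-1) ^ (k / 2 ^ r - 1) * k * (r * 2 ^ r) := fun r hr => by
    linear_combination (r * (-1 : ℤ) ^ (k / 2 ^ r - 1)) *
      four_pow_mul_div_two_pow ((padicValNat_dvd_iff_le hk).mpr hr)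
  rw [sum_range_succ, summand v le_rfl, neg_one_pow_div_two_pow_padicValNat_sub_one hk,
    sum_congr rfl fun r hr => by
      rw [summand r (mem_range.mp hr).le,
        neg_one_pow_div_two_pow_sub_one_of_lt_padicValNat hk (mem_range.mp hr)],
    ← mul_sum, sum_range_natCast_mul_two_pow]
  ring

/-- For `k ≥ 1`, `Σ_{λ·2^r = k} 4^r·r·(-1)^{λ-1}·λ = 2k·(2^{v₂(k)} - 1)`,
where `v₂` is the 2-adic valuation. -/
theorem sum_signed_factorizations (k : ℕ) (hk : 1 ≤ k) :
    ∑ p ∈ (Finset.range (k + 1) ×ˢ Finset.range (k + 1)).filter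
        (fun p => p.1 * 2 ^ p.2 = k),
        ((4 : ℤ) ^ p.2 * p.2 * (-1) ^ (p.1 - 1) * p.1)
      = 2 * (k : ℤ) * (2 ^ padicValNat 2 k - 1) :=
  sum_signed_factorizations_general k
end

section
/- Define L_r(z) recursively by L₀(z) = 4z and L_r(z) = 4·L_{r-1}(z²/(1-2z)²) + 4z for r ≥ 1. Then under the substitution z = u/(1+u)², one has L_r(z) = Σ_{j=0}^{r} 4^{j+1} · u^{2^j}/(1 + u^{2^j})². -/
open Complex Finset

/-!
Writing `z(u) = u/(1+u)²`, we have `1 - 2z(u) = (1 + u²)/(1 + u)²`, so `z` conjugates the map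
`z ↦ z²/(1-2z)²` to `u ↦ u²`. Unrolling the recursion, the `j`-th step therefore contributes
`4^(j+1) · z(u^(2^j))`.
-/

/-- `L₀(z) = 4z`, `L_r(z) = 4·L_{r-1}(z²/(1-2z)²) + 4z`. -/
noncomputable def Lred : ℕ → ℂ → ℂ
  | 0, z => 4 * z
  | r + 1, z => 4 * Lred r (z ^ 2 / (1 - 2 * z) ^ 2) + 4 * z

lemma sq_div_one_sub_two_mul_sq_of_div_one_add_sq {K : Type*} [Field K] {u : K}
    (hu : 1 + u ≠ 0) :
    (u / (1 + u) ^ 2) ^ 2 / (1 - 2 * (u / (1 + u) ^ 2)) ^ 2 = u ^ 2 / (1 + u ^ 2) ^ 2 := by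
  have hden : 1 - 2 * (u / (1 + u) ^ 2) = (1 + u ^ 2) / (1 + u) ^ 2 := by
    field_simp
    ring
  rw [hden, div_pow, div_pow, div_div_div_cancel_right₀ (by positivity)]

lemma Lred_succ_div_one_add_sq (r : ℕ) {u : ℂ} (hu : 1 + u ≠ 0) :
    Lred (r + 1) (u / (1 + u) ^ 2)
      = 4 * Lred r (u ^ 2 / (1 + u ^ 2) ^ 2) + 4 * (u / (1 + u) ^ 2) := by
  rw [Lred, sq_div_one_sub_two_mul_sq_of_div_one_add_sq hu]

lemma one_add_ne_zero_of_norm_lt_one {u : ℂ} (hu : ‖u‖ < 1) : 1 + u ≠ 0 := fun h => by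
  simp [eq_neg_of_add_eq_zero_right h] at hu

/-- Under the substitution `z = u/(1+u)²`:
`L_r(z) = Σ_{j=0}^{r} 4^{j+1}·u^{2^j}/(1+u^{2^j})²`. -/
theorem Lred_explicit (r : ℕ) (u : ℂ) (hu : ‖u‖ < 1) :
    Lred r (u / (1 + u) ^ 2)
      = ∑ j ∈ Finset.range (r + 1),
          4 ^ (j + 1) * (u ^ 2 ^ j / (1 + u ^ 2 ^ j) ^ 2) := by
  induction r generalizing u with
  | zero => simp [Lred]
  | succ r ih =>
    have hu2 : ‖u ^ 2‖ < 1 := by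
      rw [norm_pow]
      exact pow_lt_one₀ (norm_nonneg u) hu two_ne_zero
    rw [Lred_succ_div_one_add_sq r (one_add_ne_zero_of_norm_lt_one hu), ih (u ^ 2) hu2,
      sum_range_succ' _ (r + 1), mul_sum]
    congr 1
    · refine sum_congr rfl fun j _ => ?_
      rw [← pow_mul, ← pow_succ', pow_succ' 4 (j + 1), mul_assoc]
    · simp
end
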